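/- arXiv:2103.02327 — 2 statements merged into one kernel-verified Lean document; each statement's English description precedes it below -/
import Mathlib

section
/- Let N ≥ 3, 1 < p < N/(N−2), M ∈ ℝ, α = 2/(p−1), and Φ_p(X) = X^{p−1} − M α^{2p/(p+1)} X^{(p−1)/(p+1)} + α(N−2−α). Then Φ_p has exactly one positive root. -/
/-!
Write `b = (p - 1)/(p + 1)`, `C = M α^{2p/(p+1)}` and `K = α(N - 2 - α)`, so that
`Φ_p(X) = X^b (X^{p-1-b} + K X^{-b} - C)` for `X > 0`. Since `p < N/(N - 2)` forces `K < 0`, the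
map `X ↦ X^{p-1-b} + K X^{-b}` is strictly increasing on `(0, ∞)`, tends to `-∞` at `0⁺` and to `+∞`
at `∞`; by the intermediate value theorem it takes the value `C` exactly once.
-/

noncomputable def Phi (N : ℕ) (p α M X : ℝ) : ℝ :=
  X ^ (p - 1) - M * α ^ (2 * p / (p + 1)) * X ^ ((p - 1) / (p + 1)) +
    α * ((N : ℝ) - 2 - α)

open Filter Set Topology

lemma strictMonoOn_rpow_add_mul_rpow_neg {a b K : ℝ} (ha : 0 < a) (hb : 0 < b) (hK : K < 0) :
    StrictMonoOn (fun x : ℝ => x ^ a + K * x ^ (-b)) (Ioi 0) := by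
  intro x hx y hy hxy
  have hpos : x ^ a < y ^ a := Real.rpow_lt_rpow hx.le hxy ha
  have hneg : y ^ (-b) < x ^ (-b) := Real.rpow_lt_rpow_of_neg hx hxy (neg_neg_of_pos hb)
  linarith [mul_lt_mul_of_neg_left hneg hK]

lemma surjOn_rpow_add_mul_rpow_neg {a b K : ℝ} (ha : 0 < a) (hb : 0 < b) (hK : K < 0) :
    SurjOn (fun x : ℝ => x ^ a + K * x ^ (-b)) (Ioi 0) univ := by
  have hcont : ContinuousOn (fun x : ℝ => x ^ a + K * x ^ (-b)) (Ioi 0) := by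
    refine ContinuousOn.add ?_ (continuousOn_const.mul ?_) <;>
      exact continuousOn_id.rpow_const fun x hx => Or.inl (ne_of_gt hx)
  have hbot : Tendsto (fun x : ℝ => x ^ a + K * x ^ (-b)) (𝓝[>] 0) atBot := by
    have hzero : Tendsto (fun x : ℝ => x ^ a) (𝓝[>] 0) (𝓝 0) := by
      simpa [Real.zero_rpow ha.ne'] using
        ((Real.continuousAt_rpow_const 0 a (Or.inr ha.le)).tendsto).mono_left nhdsWithin_le_nhds
    exact hzero.add_atBot
      ((tendsto_rpow_neg_nhdsGT_zero (neg_neg_of_pos hb)).const_mul_atTop_of_neg hK)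
  have htop : Tendsto (fun x : ℝ => x ^ a + K * x ^ (-b)) atTop atTop := by
    simpa using (tendsto_rpow_atTop ha).atTop_add ((tendsto_rpow_neg_atTop hb).const_mul K)
  exact hcont.surjOn_of_tendsto nonempty_Ioi ((tendsto_comp_coe_Ioi_atBot (.of_dense _)).2 hbot)
    (tendsto_comp_val_Ioi_atTop.2 htop)

lemma rpow_sub_mul_rpow_add_eq_mul {b c : ℝ} (C K : ℝ) {x : ℝ} (hx : 0 < x) :
    x ^ c - C * x ^ b + K = x ^ b * (x ^ (c - b) + K * x ^ (-b) - C) := by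
  have hc : x ^ b * x ^ (c - b) = x ^ c := by rw [← Real.rpow_add hx, add_sub_cancel]
  have hK : x ^ b * x ^ (-b) = 1 := by rw [← Real.rpow_add hx, add_neg_cancel, Real.rpow_zero]
  linear_combination -hc - K * hK

theorem existsUnique_pos_rpow_sub_mul_rpow_add_eq_zero {b c K : ℝ} (C : ℝ) (hb : 0 < b)
    (hbc : b < c) (hK : K < 0) : ∃! x : ℝ, 0 < x ∧ x ^ c - C * x ^ b + K = 0 := by
  let g : ℝ → ℝ := fun x => x ^ (c - b) + K * x ^ (-b)
  have hroot : ∀ x, 0 < x → (x ^ c - C * x ^ b + K = 0 ↔ g x = C) := fun x hx => by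
    rw [rpow_sub_mul_rpow_add_eq_mul C K hx, mul_eq_zero, sub_eq_zero,
      or_iff_right (Real.rpow_pos_of_pos hx b).ne']
  obtain ⟨x, hx, hgx⟩ := surjOn_rpow_add_mul_rpow_neg (sub_pos.2 hbc) hb hK (mem_univ C)
  refine ⟨x, ⟨hx, (hroot x hx).2 hgx⟩, fun y ⟨hy, hfy⟩ => ?_⟩
  exact (strictMonoOn_rpow_add_mul_rpow_neg (sub_pos.2 hbc) hb hK).injOn hy hx
    (((hroot y hy).1 hfy).trans hgx.symm)

lemma sub_two_lt_two_div_sub_one {n p : ℝ} (hp1 : 1 < p) (hp2 : p < n / (n - 2)) :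
    n - 2 < 2 / (p - 1) := by
  have hp : 0 < p - 1 := sub_pos.2 hp1
  rcases le_or_gt (n - 2) 0 with hn | hn
  · exact hn.trans_lt (div_pos two_pos hp)
  · rw [lt_div_iff₀ hp]
    nlinarith [(lt_div_iff₀ hn).1 hp2]

theorem stmt_9_general (N : ℕ) (p α M : ℝ)
    (hp1 : 1 < p) (hp2 : p < (N : ℝ) / ((N : ℝ) - 2)) (hα : α = 2 / (p - 1)) :
    ∃! X : ℝ, 0 < X ∧ Phi N p α M X = 0 := by
  have hα_pos : 0 < α := hα ▸ div_pos two_pos (sub_pos.2 hp1)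
  have hK : α * ((N : ℝ) - 2 - α) < 0 :=
    mul_neg_of_pos_of_neg hα_pos (sub_neg.2 (hα ▸ sub_two_lt_two_div_sub_one hp1 hp2))
  have hexp : (p - 1) / (p + 1) < p - 1 := div_lt_self (by linarith) (by linarith)
  exact existsUnique_pos_rpow_sub_mul_rpow_add_eq_zero _ (by positivity) hexp hK

theorem stmt_9 (N : ℕ) (p α M : ℝ) (hN : 3 ≤ N)
    (hp1 : 1 < p) (hp2 : p < (N : ℝ) / ((N : ℝ) - 2)) (hα : α = 2 / (p - 1)) :
    ∃! X : ℝ, 0 < X ∧ Phi N p α M X = 0 :=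
  stmt_9_general N p α M hp1 hp2 hα
end

section
/- Let N ≥ 3, p > N/(N−2), α = 2/(p−1), and Φ_p(X) = X^{p−1} − M α^{2p/(p+1)} X^{(p−1)/(p+1)} + α(N−2−α) for X > 0. There exists a threshold m* > 0 such that: Φ_p has two distinct positive roots if M > m*, exactly one positive root if M = m*, and no positive root if 0 < M < m*. -/
open Real

lemma aux_min (q K Y : ℝ) (hq : 1 < q) (hK : 0 < K) (hY : 0 < Y)
    (hne : Y ≠ (K / (q - 1)) ^ (1/q)) :
    0 < Y ^ q - (q * ((K / (q-1)) ^ (1/q)) ^ (q-1)) * Y + K := by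
  set Y₀ : ℝ := (K / (q-1)) ^ (1/q) with hY₀def
  have hq0 : (0:ℝ) < q := by linarith
  have hq1 : 0 < q - 1 := by linarith
  have hKq : 0 < K / (q - 1) := div_pos hK hq1
  have hY₀ : 0 < Y₀ := rpow_pos_of_pos hKq _
  have hY₀q : Y₀ ^ q = K / (q - 1) := by
    rw [hY₀def, ← rpow_mul hKq.le, one_div_mul_cancel hq0.ne', rpow_one]
  have hKeq : K = (q - 1) * Y₀ ^ q := by
    rw [hY₀q]; field_simp
  have hsum : Y₀ ^ (q-1) * Y₀ = Y₀ ^ q := by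
    rw [← rpow_add_one hY₀.ne' (q-1)]; ring_nf
  have hs1 : (0:ℝ) < Y / Y₀ := div_pos hY hY₀
  have hs : -1 ≤ Y / Y₀ - 1 := by linarith
  have hs' : Y / Y₀ - 1 ≠ 0 := by
    intro h
    apply hne
    have : Y / Y₀ = 1 := by linarith
    field_simp at this
    simpa [hY₀def] using this
  have hB := one_add_mul_self_lt_rpow_one_add hs hs' hq
  rw [show 1 + (Y / Y₀ - 1) = Y / Y₀ by ring, div_rpow hY.le hY₀.le] at hB
  have hY₀qpos : 0 < Y₀ ^ q := rpow_pos_of_pos hY₀ _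
  have hB2 : (1 + q * (Y / Y₀ - 1)) * Y₀ ^ q < Y ^ q := by
    rw [← lt_div_iff₀ hY₀qpos] at *
    exact hB
  have hexp : (1 + q * (Y / Y₀ - 1)) * Y₀ ^ q
      = Y₀ ^ q + q * Y₀ ^ (q-1) * Y - q * Y₀ ^ q := by
    have : q * (Y / Y₀) * Y₀ ^ q = q * Y₀ ^ (q-1) * Y := by
      rw [← hsum]; field_simp
    nlinarith [this]
  nlinarith [hB2, hexp, hKeq]

lemma aux_key (q K : ℝ) (hq : 1 < q) (hK : 0 < K) :
    ∃ lstar : ℝ, 0 < lstar ∧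
      (∀ l, lstar < l → ∃ Y₁ Y₂ : ℝ, 0 < Y₁ ∧ 0 < Y₂ ∧ Y₁ ≠ Y₂ ∧
        Y₁ ^ q - l * Y₁ + K = 0 ∧ Y₂ ^ q - l * Y₂ + K = 0) ∧
      (∃! Y : ℝ, 0 < Y ∧ Y ^ q - lstar * Y + K = 0) ∧
      (∀ l, l < lstar → ∀ Y : ℝ, 0 < Y → Y ^ q - l * Y + K ≠ 0) := by
  have hq0 : (0:ℝ) < q := by linarith
  have hq1 : 0 < q - 1 := by linarith
  have hKq : 0 < K / (q - 1) := div_pos hK hq1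
  set Y₀ : ℝ := (K / (q-1)) ^ (1/q) with hY₀def
  have hY₀ : 0 < Y₀ := rpow_pos_of_pos hKq _
  set lstar : ℝ := q * Y₀ ^ (q-1) with hlstardef
  have hY₀p : 0 < Y₀ ^ (q-1) := rpow_pos_of_pos hY₀ _
  have hl0 : 0 < lstar := by positivity
  have hY₀q : Y₀ ^ q = K / (q - 1) := by
    rw [hY₀def, ← rpow_mul hKq.le, one_div_mul_cancel hq0.ne', rpow_one]
  have hKeq : K = (q - 1) * Y₀ ^ q := by rw [hY₀q]; field_simp
  have hsum : Y₀ ^ (q-1) * Y₀ = Y₀ ^ q := by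
    rw [← rpow_add_one hY₀.ne' (q-1)]; ring_nf
  have hroot : Y₀ ^ q - lstar * Y₀ + K = 0 := by
    rw [hlstardef]
    nlinarith [hsum, hKeq]
  have hmin : ∀ Y : ℝ, 0 < Y → 0 ≤ Y ^ q - lstar * Y + K := by
    intro Y hY
    rcases eq_or_ne Y Y₀ with rfl | hne
    · rw [hroot]
    · exact (aux_min q K Y hq hK hY hne).le
  refine ⟨lstar, hl0, ?_, ?_, ?_⟩
  · -- two roots for l > lstar
    intro l hl
    have hlpos : 0 < l := hl0.trans hl
    set f : ℝ → ℝ := fun Y => Y ^ q - l * Y + K with hf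
    have hcont : Continuous f := by
      apply ((continuous_rpow_const hq0.le).sub (continuous_const.mul continuous_id)).add
        continuous_const
    have hfY₀ : f Y₀ < 0 := by
      have : f Y₀ = (Y₀ ^ q - lstar * Y₀ + K) - (l - lstar) * Y₀ := by ring
      rw [this, hroot]
      nlinarith
    set ε : ℝ := min Y₀ (K / (2 * l)) with hε
    have hε0 : 0 < ε := lt_min hY₀ (by positivity)
    have hεY₀ : ε ≤ Y₀ := min_le_left _ _
    have hfε : 0 < f ε := by
      have h1 : l * ε ≤ K / 2 := by
        have := min_le_right Y₀ (K / (2 * l))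
        calc l * ε ≤ l * (K / (2 * l)) := by nlinarith
          _ = K / 2 := by field_simp
      have h2 : 0 < ε ^ q := rpow_pos_of_pos hε0 _
      simp only [hf]
      nlinarith
    set R : ℝ := Y₀ + l ^ (1/(q-1)) + 1 with hR
    have hlp : 0 < l ^ (1/(q-1)) := rpow_pos_of_pos hlpos _
    have hRY₀ : Y₀ ≤ R := by simp only [hR]; linarith
    have hR0 : 0 < R := lt_of_lt_of_le hY₀ hRY₀
    have hRp : l ≤ R ^ (q-1) := by
      have h1 : l ^ (1/(q-1)) ≤ R := by simp only [hR]; linarith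
      calc l = (l ^ (1/(q-1))) ^ (q-1) := by
              rw [← rpow_mul hlpos.le, one_div_mul_cancel hq1.ne', rpow_one]
        _ ≤ R ^ (q-1) := rpow_le_rpow hlp.le h1 hq1.le
    have hfR : 0 < f R := by
      have hRq : R ^ q = R ^ (q-1) * R := by
        rw [← rpow_add_one hR0.ne' (q-1)]; ring_nf
      simp only [hf]
      nlinarith
    -- IVT on [ε, Y₀]
    have h1 : (0:ℝ) ∈ Set.Icc (f Y₀) (f ε) := ⟨hfY₀.le, hfε.le⟩
    obtain ⟨Y₁, hY₁mem, hY₁⟩ := intermediate_value_Icc' hεY₀ hcont.continuousOn h1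
    have h2 : (0:ℝ) ∈ Set.Icc (f Y₀) (f R) := ⟨hfY₀.le, hfR.le⟩
    obtain ⟨Y₂, hY₂mem, hY₂⟩ := intermediate_value_Icc hRY₀ hcont.continuousOn h2
    refine ⟨Y₁, Y₂, lt_of_lt_of_le hε0 hY₁mem.1, lt_of_lt_of_le hY₀ hY₂mem.1, ?_, hY₁, hY₂⟩
    intro heq
    have : Y₁ = Y₀ := le_antisymm hY₁mem.2 (heq ▸ hY₂mem.1)
    rw [this] at hY₁
    exact absurd hY₁ hfY₀.ne
  · -- unique root at lstar
    refine ⟨Y₀, ⟨hY₀, hroot⟩, ?_⟩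
    rintro Y ⟨hY, hY0⟩
    by_contra hne
    exact absurd hY0 (aux_min q K Y hq hK hY hne).ne'
  · -- no root for l < lstar
    intro l hl Y hY
    have h1 : Y ^ q - l * Y + K = (Y ^ q - lstar * Y + K) + (lstar - l) * Y := by ring
    have h2 := hmin Y hY
    nlinarith [h1, h2]

theorem stmt_11 (N : ℕ) (p α : ℝ) (hN : 3 ≤ N)
    (hp : p > (N : ℝ) / ((N : ℝ) - 2)) (hα : α = 2 / (p - 1)) :
    ∃ mstar : ℝ, 0 < mstar ∧
      (∀ M : ℝ, mstar < M →
        ∃ X₁ X₂ : ℝ, 0 < X₁ ∧ 0 < X₂ ∧ X₁ ≠ X₂ ∧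
          Phi N p α M X₁ = 0 ∧ Phi N p α M X₂ = 0) ∧
      (∃! X : ℝ, 0 < X ∧ Phi N p α mstar X = 0) ∧
      (∀ M : ℝ, 0 < M → M < mstar → ¬ ∃ X : ℝ, 0 < X ∧ Phi N p α M X = 0) := by
  have hN3 : (3:ℝ) ≤ (N:ℝ) := by exact_mod_cast hN
  have hN2 : (0:ℝ) < (N:ℝ) - 2 := by linarith
  have hp1 : 1 < p := lt_of_lt_of_le (by rw [lt_div_iff₀ hN2]; linarith) hp.le
  have hα0 : 0 < α := by rw [hα]; exact div_pos two_pos (by linarith)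
  have hpN : (N:ℝ) < p * ((N:ℝ) - 2) := by
    rw [gt_iff_lt, div_lt_iff₀ hN2] at hp; exact hp
  have hαN : α < (N:ℝ) - 2 := by
    rw [hα, div_lt_iff₀ (by linarith : (0:ℝ) < p - 1)]
    nlinarith
  set K : ℝ := α * ((N:ℝ) - 2 - α) with hKdef
  have hK : 0 < K := by
    apply mul_pos hα0; linarith
  set c : ℝ := α ^ (2 * p / (p + 1)) with hcdef
  have hc : 0 < c := rpow_pos_of_pos hα0 _
  set q : ℝ := p + 1 with hqdef
  have hq : 1 < q := by simp only [hqdef]; linarith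
  set b : ℝ := (p - 1) / (p + 1) with hbdef
  have hb : 0 < b := div_pos (by linarith) (by linarith)
  have hbinv : 1 / b = (p + 1) / (p - 1) := by rw [hbdef, one_div_div]
  -- translation: Phi N p α M X = (X^b)^q - (M*c)*(X^b) + K for X > 0
  have htrans : ∀ M X : ℝ, 0 < X →
      Phi N p α M X = (X ^ b) ^ q - (M * c) * (X ^ b) + K := by
    intro M X hX
    have h1 : (X ^ b) ^ q = X ^ (p - 1) := by
      rw [← rpow_mul hX.le, hbdef, hqdef, div_mul_cancel₀ _ (by linarith : p + 1 ≠ 0)]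
    rw [Phi, h1, hKdef, hcdef, hbdef]
  obtain ⟨lstar, hl0, htwo, hone, hnone⟩ := aux_key q K hq hK
  refine ⟨lstar / c, div_pos hl0 hc, ?_, ?_, ?_⟩
  · intro M hM
    have hl : lstar < M * c := by
      rw [div_lt_iff₀ hc] at hM; linarith
    obtain ⟨Y₁, Y₂, hY₁, hY₂, hne, h₁, h₂⟩ := htwo (M * c) hl
    refine ⟨Y₁ ^ (1/b), Y₂ ^ (1/b), rpow_pos_of_pos hY₁ _, rpow_pos_of_pos hY₂ _, ?_, ?_, ?_⟩
    · intro heq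
      apply hne
      have e1 : (Y₁ ^ (1/b)) ^ b = Y₁ := by
        rw [← rpow_mul hY₁.le, one_div_mul_cancel hb.ne', rpow_one]
      have e2 : (Y₂ ^ (1/b)) ^ b = Y₂ := by
        rw [← rpow_mul hY₂.le, one_div_mul_cancel hb.ne', rpow_one]
      rw [← e1, ← e2, heq]
    · rw [htrans M _ (rpow_pos_of_pos hY₁ _), ← rpow_mul hY₁.le,
        one_div_mul_cancel hb.ne', rpow_one]
      exact h₁
    · rw [htrans M _ (rpow_pos_of_pos hY₂ _), ← rpow_mul hY₂.le,
        one_div_mul_cancel hb.ne', rpow_one]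
      exact h₂
  · obtain ⟨Y₀, ⟨hY₀, hY₀root⟩, hY₀uniq⟩ := hone
    have hlc : lstar / c * c = lstar := div_mul_cancel₀ _ hc.ne'
    refine ⟨Y₀ ^ (1/b), ⟨rpow_pos_of_pos hY₀ _, ?_⟩, ?_⟩
    · rw [htrans _ _ (rpow_pos_of_pos hY₀ _), ← rpow_mul hY₀.le,
        one_div_mul_cancel hb.ne', rpow_one, hlc]
      exact hY₀root
    · rintro X ⟨hX, hXroot⟩
      rw [htrans _ _ hX, hlc] at hXroot
      have hXb : X ^ b = Y₀ := hY₀uniq _ ⟨rpow_pos_of_pos hX _, hXroot⟩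
      rw [← hXb, ← rpow_mul hX.le, mul_one_div, div_self hb.ne', rpow_one]
  · rintro M hM0 hM ⟨X, hX, hXroot⟩
    rw [htrans _ _ hX] at hXroot
    have hl : M * c < lstar := by
      rw [lt_div_iff₀ hc] at hM; linarith
    exact hnone (M * c) hl (X ^ b) (rpow_pos_of_pos hX _) hXroot
end
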